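/- arXiv:2109.06451 — 2 statements merged into one kernel-verified Lean document; each statement's English description precedes it below -/
import Mathlib

section
/- Let k be a field and w1, w2 positive integers. Consider the map φ: A^3 → A^4 given by (x, y, z) ↦ (x, y, z^{w1} x, z^{w2} y). Let V ⊆ A^3 be the open subset where (x,y) ≠ (0,0) and U ⊆ A^4 the open subset where the first two coordinates are not both zero. Then φ restricts to a finite morphism V → U. -/
/-!
On the chart `x ≠ 0` the coordinate ring `k[x,y,z]_x` of `V` is generated over the image
subalgebra `A` (which contains `x`, `y` and `1/x`) by `z` alone, and `z` is integral over `A`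
because `z ^ w1 = (z ^ w1 x) · x⁻¹ ∈ A`; hence `k[x,y,z]_x = A[z]` is a finite `A`-module.
The chart `y ≠ 0` is symmetric, with `z ^ w2 = (z ^ w2 y) · y⁻¹`.
-/

open MvPolynomial

theorem IsLocalization.Away.eq_top_of_invSelf_mem {R L : Type*} [CommRing R] [CommRing L]
    [Algebra R L] (x : R) [IsLocalization.Away x L] {T : Subsemiring L}
    (hR : ∀ r, algebraMap R L r ∈ T) (hinv : invSelf x ∈ T) : T = ⊤ := by
  refine eq_top_iff.mpr fun z _ ↦ ?_
  obtain ⟨n, a, hz⟩ := surj x z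
  have hz' : z = algebraMap R L a * invSelf x ^ n := by
    rw [← hz, mul_assoc, ← mul_pow, mul_invSelf, one_pow, mul_one]
  exact hz' ▸ mul_mem (hR a) (pow_mem hinv n)

theorem algebraMap_mem_of_adjoin_eq_top {k R L : Type*} [CommRing k] [CommRing R] [CommRing L]
    [Algebra k R] [Algebra R L] [Algebra k L] [IsScalarTower k R L] {s : Set R}
    (hs : Algebra.adjoin k s = ⊤) {T : Subalgebra k L} (hT : ∀ x ∈ s, algebraMap R L x ∈ T)
    (r : R) : algebraMap R L r ∈ T := by
  have hle : (Algebra.adjoin k s).map (IsScalarTower.toAlgHom k R L) ≤ T := by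
    rw [AlgHom.map_adjoin, Algebra.adjoin_le_iff]
    rintro _ ⟨x, hx, rfl⟩
    exact hT x hx
  exact hle ⟨r, hs ▸ Algebra.mem_top, rfl⟩

theorem Subalgebra.isIntegral_of_pow_mem {k L : Type*} [CommRing k] [CommRing L] [Algebra k L]
    {A : Subalgebra k L} {x : L} {n : ℕ} (hn : 0 < n) (hx : x ^ n ∈ A) : IsIntegral A x :=
  IsIntegral.of_pow hn (isIntegral_algebraMap (x := (⟨x ^ n, hx⟩ : A)))

theorem MvPolynomial.finite_away_of_X_pow_mul_mem {σ k L : Type*} [CommRing k] [CommRing L]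
    [Algebra (MvPolynomial σ k) L] [Algebra k L] [IsScalarTower k (MvPolynomial σ k) L]
    (f : MvPolynomial σ k) [IsLocalization.Away f L] {A : Subalgebra k L} (i : σ) {w : ℕ}
    (hw : 0 < w) (hX : ∀ j ≠ i, algebraMap _ L (X j : MvPolynomial σ k) ∈ A)
    (hinv : IsLocalization.Away.invSelf f ∈ A) (hXf : algebraMap _ L (X i ^ w * f) ∈ A) :
    Module.Finite A L := by
  set ζ := algebraMap (MvPolynomial σ k) L (X i)
  have hζ : ζ ^ w ∈ A := by
    have : ζ ^ w = algebraMap _ L (X i ^ w * f) * IsLocalization.Away.invSelf f := by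
      rw [map_mul, mul_assoc, IsLocalization.Away.mul_invSelf, mul_one, map_pow]
    exact this ▸ mul_mem hXf hinv
  have hA : ∀ a ∈ A, a ∈ Algebra.adjoin A {ζ} := fun a ha ↦
    Subalgebra.algebraMap_mem _ (⟨a, ha⟩ : A)
  have htop : Algebra.adjoin A {ζ} = ⊤ := by
    refine Subalgebra.toSubsemiring_injective
      (IsLocalization.Away.eq_top_of_invSelf_mem f (fun r ↦ ?_) (hA _ hinv))
    refine algebraMap_mem_of_adjoin_eq_top (adjoin_range_X (R := k) (σ := σ))
      (T := (Algebra.adjoin A {ζ}).restrictScalars k) ?_ r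
    rintro _ ⟨j, rfl⟩
    by_cases hj : j = i
    · exact hj ▸ Algebra.self_mem_adjoin_singleton A ζ
    · exact hA _ (hX j hj)
  have hfg := (Subalgebra.isIntegral_of_pow_mem hw hζ).fg_adjoin_singleton
  rw [htop, Algebra.top_toSubmodule] at hfg
  exact ⟨hfg⟩

theorem blowup_chart_map_is_finite (k : Type) [Field k] (w1 w2 : ℕ)
    (hw1 : 0 < w1) (hw2 : 0 < w2) :
    (Module.Finite
      (Algebra.adjoin k
        ({algebraMap (MvPolynomial (Fin 3) k)
            (Localization.Away (X 0 : MvPolynomial (Fin 3) k)) (X 0),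
          algebraMap (MvPolynomial (Fin 3) k)
            (Localization.Away (X 0 : MvPolynomial (Fin 3) k)) (X 1),
          algebraMap (MvPolynomial (Fin 3) k)
            (Localization.Away (X 0 : MvPolynomial (Fin 3) k)) (X 2 ^ w1 * X 0),
          algebraMap (MvPolynomial (Fin 3) k)
            (Localization.Away (X 0 : MvPolynomial (Fin 3) k)) (X 2 ^ w2 * X 1),
          IsLocalization.Away.invSelf
            (S := Localization.Away (X 0 : MvPolynomial (Fin 3) k))
            (X 0 : MvPolynomial (Fin 3) k)} :
          Set (Localization.Away (X 0 : MvPolynomial (Fin 3) k))))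
      (Localization.Away (X 0 : MvPolynomial (Fin 3) k)))
    ∧
    (Module.Finite
      (Algebra.adjoin k
        ({algebraMap (MvPolynomial (Fin 3) k)
            (Localization.Away (X 1 : MvPolynomial (Fin 3) k)) (X 0),
          algebraMap (MvPolynomial (Fin 3) k)
            (Localization.Away (X 1 : MvPolynomial (Fin 3) k)) (X 1),
          algebraMap (MvPolynomial (Fin 3) k)
            (Localization.Away (X 1 : MvPolynomial (Fin 3) k)) (X 2 ^ w1 * X 0),
          algebraMap (MvPolynomial (Fin 3) k)
            (Localization.Away (X 1 : MvPolynomial (Fin 3) k)) (X 2 ^ w2 * X 1),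
          IsLocalization.Away.invSelf
            (S := Localization.Away (X 1 : MvPolynomial (Fin 3) k))
            (X 1 : MvPolynomial (Fin 3) k)} :
          Set (Localization.Away (X 1 : MvPolynomial (Fin 3) k))))
      (Localization.Away (X 1 : MvPolynomial (Fin 3) k))) := by
  constructor
  · exact finite_away_of_X_pow_mul_mem (X 0) (2 : Fin 3) hw1
      (fun j _ ↦ Algebra.subset_adjoin (by fin_cases j <;> simp_all))
      (Algebra.subset_adjoin (by simp)) (Algebra.subset_adjoin (by simp))
  · exact finite_away_of_X_pow_mul_mem (X 1) (2 : Fin 3) hw2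
      (fun j _ ↦ Algebra.subset_adjoin (by fin_cases j <;> simp_all))
      (Algebra.subset_adjoin (by simp)) (Algebra.subset_adjoin (by simp))
end

section
/- Let k be a field with 6 invertible. The polynomials x = X3^2/X2^3 and y = X4/X2^2 define an isomorphism between the affine open chart {X2 ≠ 0, X3 ≠ 0} of the weighted projective space P(2,3,4) and Spec(k[x,y]_x), i.e. the degree-0 part of the localization k[X2, X3, X4][1/(X2 X3)] (with deg X2 = 2, deg X3 = 3, deg X4 = 4) is the Laurent-polynomial-type ring k[x, y, x^{−1}] with x = X3^2/X2^3, y = X4/X2^2. -/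
open MvPolynomial

private lemma whPow {σ R M : Type*} [CommSemiring R] [AddCommMonoid M] {w : σ → M}
    {φ : MvPolynomial σ R} {m : M} (h : φ.IsWeightedHomogeneous w m) (e : ℕ) :
    (φ ^ e).IsWeightedHomogeneous w (e • m) := by
  induction e with
  | zero => simpa using isWeightedHomogeneous_one R w
  | succ n ih =>
      rw [pow_succ, succ_nsmul]
      exact ih.mul h

private lemma pow_helper {R : Type*} [CommRing R] (A B C : R) (a b c m n i j : ℕ)
    (h1 : a + m = i + n) (h2 : b + m = j + (2 * c + n)) :
    A ^ a * B ^ b * C ^ c * (A * B) ^ m = A ^ i * B ^ j * (C * B ^ 2) ^ c * (A * B) ^ n := by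
  have l : A ^ a * B ^ b * C ^ c * (A * B) ^ m = A ^ (a + m) * B ^ (b + m) * C ^ c := by
    rw [pow_add, pow_add, mul_pow]; ring
  have r : A ^ i * B ^ j * (C * B ^ 2) ^ c * (A * B) ^ n
      = A ^ (i + n) * B ^ (j + (2 * c + n)) * C ^ c := by
    rw [pow_add, pow_add, pow_add, pow_mul, mul_pow, mul_pow]; ring
  rw [l, r, h1, h2]

set_option maxHeartbeats 1000000 in
theorem degree_zero_part_of_chart (k : Type) [Field k]
    (h2 : (2 : k) ≠ 0) (h3 : (3 : k) ≠ 0) :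
    let P := MvPolynomial (Fin 3) k
    let L := Localization.Away ((X 0 * X 1 : MvPolynomial (Fin 3) k))
    let u : L := IsLocalization.Away.invSelf (S := L) (X 0 * X 1 : MvPolynomial (Fin 3) k)
    let xx : L := algebraMap (MvPolynomial (Fin 3) k) L (X 1 ^ 5) * u ^ 3
    let yy : L := algebraMap (MvPolynomial (Fin 3) k) L (X 2 * X 1 ^ 2) * u ^ 2
    let xinv : L := algebraMap (MvPolynomial (Fin 3) k) L (X 0 ^ 5) * u ^ 2
    ({z : L | ∃ (n : ℕ) (f : MvPolynomial (Fin 3) k),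
        f.IsWeightedHomogeneous (![2, 3, 4] : Fin 3 → ℕ) (5 * n) ∧
        z = algebraMap (MvPolynomial (Fin 3) k) L f * u ^ n}
      = ↑(Algebra.adjoin k ({xx, yy, xinv} : Set L)))
    ∧ AlgebraicIndependent k ![xx, yy] := by
  intro P L u xx yy xinv
  set w : Fin 3 → ℕ := ![2, 3, 4] with hw
  set A := algebraMap (MvPolynomial (Fin 3) k) L with hA
  set t : L := A (X 0 * X 1) with ht
  have htu : t * u = 1 := IsLocalization.Away.mul_invSelf (S := L) _
  have hpow : ∀ m : ℕ, t ^ m * u ^ m = 1 := fun m => by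
    rw [← mul_pow, htu, one_pow]
  have loc_eq : ∀ (p q : MvPolynomial (Fin 3) k) (n m : ℕ),
      p * (X 0 * X 1) ^ m = q * (X 0 * X 1) ^ n → A p * u ^ n = A q * u ^ m := by
    intro p q n m h
    have key : A p * t ^ m = A q * t ^ n := by
      rw [ht, ← map_pow, ← map_pow, ← map_mul, ← map_mul, h]
    linear_combination (u ^ n * u ^ m) * key - A p * u ^ n * hpow m + A q * u ^ m * hpow n
  -- homogeneity of X0*X1
  have w5 : (X 0 * X 1 : MvPolynomial (Fin 3) k).IsWeightedHomogeneous w 5 := by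
    have := (isWeightedHomogeneous_X k w 0).mul (isWeightedHomogeneous_X k w 1)
    simpa [hw] using this
  -- power formulas
  have hxx_pow : ∀ e : ℕ, xx ^ e = A (X 1 ^ (5 * e)) * u ^ (3 * e) := by
    intro e
    show (A (X 1 ^ 5) * u ^ 3) ^ e = _
    rw [mul_pow, ← map_pow, ← pow_mul, ← pow_mul, mul_comm 5 e, mul_comm 3 e]
  have hyy_pow : ∀ e : ℕ, yy ^ e = A ((X 2 * X 1 ^ 2) ^ e) * u ^ (2 * e) := by
    intro e
    show (A (X 2 * X 1 ^ 2) * u ^ 2) ^ e = _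
    rw [mul_pow, ← map_pow, ← pow_mul, mul_comm 2 e, pow_mul]
  have hxinv_pow : ∀ e : ℕ, xinv ^ e = A (X 0 ^ (5 * e)) * u ^ (2 * e) := by
    intro e
    show (A (X 0 ^ 5) * u ^ 2) ^ e = _
    rw [mul_pow, ← map_pow, ← pow_mul, ← pow_mul, mul_comm 5 e, mul_comm 2 e]
  constructor
  · apply Set.Subset.antisymm
    · -- degree-0 set ⊆ adjoin
      rintro z ⟨n, f, hf, rfl⟩
      have hxmem : xx ∈ Algebra.adjoin k ({xx, yy, xinv} : Set L) :=
        Algebra.subset_adjoin (by simp)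
      have hymem : yy ∈ Algebra.adjoin k ({xx, yy, xinv} : Set L) :=
        Algebra.subset_adjoin (by simp)
      have himem : xinv ∈ Algebra.adjoin k ({xx, yy, xinv} : Set L) :=
        Algebra.subset_adjoin (by simp)
      have expand : A f * u ^ n = ∑ d ∈ f.support, A (monomial d (coeff d f)) * u ^ n := by
        conv_lhs => rw [f.as_sum]
        rw [map_sum, Finset.sum_mul]
      rw [expand]
      apply Subalgebra.sum_mem
      intro d hd
      have hdeg : 2 * d 0 + 3 * d 1 + 4 * d 2 = 5 * n := by
        have h0 := hf (mem_support_iff.mp hd)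
        rw [Finsupp.weight_apply, Finsupp.sum_fintype _ _ (fun i => zero_smul ℕ (w i))] at h0
        rw [Fin.sum_univ_three] at h0
        simp only [hw, smul_eq_mul, Matrix.cons_val_zero, Matrix.cons_val_one, Matrix.head_cons,
          Matrix.cons_val_two, Matrix.tail_cons] at h0
        omega
      have hmon : (monomial d (coeff d f) : MvPolynomial (Fin 3) k)
          = C (coeff d f) * (X 0 ^ d 0 * X 1 ^ d 1 * X 2 ^ d 2) := by
        rw [monomial_eq]
        congr 1
        rw [Finsupp.prod_fintype _ _ (fun i => pow_zero _), Fin.prod_univ_three]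
      rw [hmon, map_mul, mul_assoc]
      apply Subalgebra.mul_mem
      · have : A (C (coeff d f)) = algebraMap k L (coeff d f) := by
          rw [hA, ← MvPolynomial.algebraMap_eq, ← IsScalarTower.algebraMap_apply k (MvPolynomial (Fin 3) k) L]
        rw [this]
        exact Subalgebra.algebraMap_mem _ _
      · by_cases hcase : n ≤ d 1
        · obtain ⟨e, he⟩ : ∃ e, d 1 = n + 2 * e := ⟨(d 1 - n) / 2, by omega⟩
          have hval : A (X 0 ^ d 0 * X 1 ^ d 1 * X 2 ^ d 2) * u ^ n
              = xx ^ e * yy ^ d 2 := by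
            rw [hxx_pow, hyy_pow, mul_mul_mul_comm, ← map_mul, ← pow_add]
            apply loc_eq
            have := pow_helper (X 0 : MvPolynomial (Fin 3) k) (X 1) (X 2)
              (d 0) (d 1) (d 2) (3 * e + 2 * d 2) n 0 (5 * e) (by omega) (by omega)
            simpa using this
          rw [hval]
          exact Subalgebra.mul_mem _ (Subalgebra.pow_mem _ hxmem e) (Subalgebra.pow_mem _ hymem _)
        · obtain ⟨e, he⟩ : ∃ e, n = d 1 + 2 * e := ⟨(n - d 1) / 2, by omega⟩
          have hval : A (X 0 ^ d 0 * X 1 ^ d 1 * X 2 ^ d 2) * u ^ n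
              = xinv ^ e * yy ^ d 2 := by
            rw [hxinv_pow, hyy_pow, mul_mul_mul_comm, ← map_mul, ← pow_add]
            apply loc_eq
            have := pow_helper (X 0 : MvPolynomial (Fin 3) k) (X 1) (X 2)
              (d 0) (d 1) (d 2) (2 * e + 2 * d 2) n (5 * e) 0 (by omega) (by omega)
            simpa using this
          rw [hval]
          exact Subalgebra.mul_mem _ (Subalgebra.pow_mem _ himem e) (Subalgebra.pow_mem _ hymem _)
    · -- adjoin ⊆ degree-0 set
      have hsub : Algebra.adjoin k ({xx, yy, xinv} : Set L) ≤
          { carrier := {z : L | ∃ (n : ℕ) (f : MvPolynomial (Fin 3) k),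
              f.IsWeightedHomogeneous w (5 * n) ∧ z = A f * u ^ n}
            one_mem' := ⟨0, 1, by simpa using isWeightedHomogeneous_one k w, by simp⟩
            zero_mem' := ⟨0, 0, isWeightedHomogeneous_zero (R := k) w (5 * 0), by simp⟩
            mul_mem' := by
              rintro a b ⟨n, f, hf, rfl⟩ ⟨m, g, hg, rfl⟩
              refine ⟨n + m, f * g, ?_, ?_⟩
              · have h1 := hf.mul hg
                rwa [show 5 * n + 5 * m = 5 * (n + m) by ring] at h1
              · rw [map_mul, pow_add]; ring
            add_mem' := by
              rintro a b ⟨n, f, hf, rfl⟩ ⟨m, g, hg, rfl⟩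
              refine ⟨n + m, f * (X 0 * X 1) ^ m + g * (X 0 * X 1) ^ n, ?_, ?_⟩
              · have h1 := hf.mul (whPow w5 m)
                have h2 := hg.mul (whPow w5 n)
                rw [smul_eq_mul, show 5 * n + m * 5 = 5 * (n + m) by ring] at h1
                rw [smul_eq_mul, show 5 * m + n * 5 = 5 * (n + m) by ring] at h2
                exact h1.add h2
              · rw [map_add, map_mul, map_mul, map_pow, map_pow, pow_add]
                have hm := hpow m
                have hn := hpow n
                rw [ht] at hm hn
                linear_combination (-(A f * u ^ n)) * hm + (-(A g * u ^ m)) * hn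
            algebraMap_mem' := fun r => ⟨0, C r, isWeightedHomogeneous_C w r, by
              rw [pow_zero, mul_one, hA, ← MvPolynomial.algebraMap_eq,
                ← IsScalarTower.algebraMap_apply k (MvPolynomial (Fin 3) k) L]⟩ } := by
        apply Algebra.adjoin_le
        rintro z hz
        simp only [Set.mem_insert_iff, Set.mem_singleton_iff] at hz
        rcases hz with rfl | rfl | rfl
        · refine ⟨3, X 1 ^ 5, ?_, rfl⟩
          have h1 := whPow (isWeightedHomogeneous_X k w 1) 5
          have : (5 : ℕ) • w 1 = 5 * 3 := by simp [hw]
          rwa [this] at h1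
        · refine ⟨2, X 2 * X 1 ^ 2, ?_, rfl⟩
          have h1 := (isWeightedHomogeneous_X k w 2).mul (whPow (isWeightedHomogeneous_X k w 1) 2)
          have : w 2 + (2 : ℕ) • w 1 = 5 * 2 := by simp [hw]
          rwa [this] at h1
        · refine ⟨2, X 0 ^ 5, ?_, rfl⟩
          have h1 := whPow (isWeightedHomogeneous_X k w 0) 5
          have : (5 : ℕ) • w 0 = 5 * 2 := by simp [hw]
          rwa [this] at h1
      exact fun z hz => hsub hz
  · -- algebraic independence
    have hBinj : Function.Injective
        (algebraMap (MvPolynomial (Fin 2) k) (FractionRing (MvPolynomial (Fin 2) k))) :=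
      IsFractionRing.injective _ _
    set F := FractionRing (MvPolynomial (Fin 2) k) with hF
    set B := algebraMap (MvPolynomial (Fin 2) k) F with hB
    set g : Fin 3 → F := ![B (X 0), B (X 0) ^ 2, B (X 1) * B (X 0) ^ 2] with hg
    set ψ : MvPolynomial (Fin 3) k →ₐ[k] F := aeval g with hψ
    have hψ01 : ψ (X 0 * X 1) = B (X 0) ^ 3 := by
      rw [map_mul, hψ, aeval_X, aeval_X, hg]
      simp only [Matrix.cons_val_zero, Matrix.cons_val_one, Matrix.head_cons]
      ring
    have hBX0 : B (X 0) ≠ 0 := fun h => (X_ne_zero (0 : Fin 2)) (hBinj (by rw [map_zero]; exact h))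
    have hunit : IsUnit ((ψ : MvPolynomial (Fin 3) k →+* F) (X 0 * X 1)) := by
      rw [show (ψ : MvPolynomial (Fin 3) k →+* F) (X 0 * X 1) = B (X 0) ^ 3 from hψ01]
      exact isUnit_iff_ne_zero.mpr (pow_ne_zero _ hBX0)
    set φ0 : L →+* F := IsLocalization.Away.lift (S := L) (X 0 * X 1) hunit with hφ0
    have hφA : ∀ p : MvPolynomial (Fin 3) k, φ0 (A p) = ψ p := fun p =>
      IsLocalization.Away.lift_eq _ hunit p
    have hcomm : ∀ r : k, φ0 (algebraMap k L r) = algebraMap k F r := by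
      intro r
      rw [IsScalarTower.algebraMap_apply k (MvPolynomial (Fin 3) k) L r,
        MvPolynomial.algebraMap_eq]
      exact (hφA (C r)).trans (by simp [hψ])
    set φ : L →ₐ[k] F := { φ0 with commutes' := hcomm } with hφ
    have hφap : ∀ z : L, φ z = φ0 z := fun z => rfl
    have hφu : φ u * B (X 0) ^ 3 = 1 := by
      have h1 : φ (t * u) = 1 := by rw [htu]; exact map_one φ
      rw [map_mul] at h1
      have hh : φ t = B (X 0) ^ 3 := by
        rw [ht, hφap, hφA, hψ01]
      rw [hh] at h1
      linear_combination h1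
    have hφxx : φ xx = B (X 0) := by
      have key : φ xx * B (X 0) ^ 9 = B (X 0) * B (X 0) ^ 9 := by
        have hψ5 : ψ (X 1 ^ 5) = B (X 0) ^ 10 := by
          rw [map_pow, hψ, aeval_X, hg]
          simp only [Matrix.cons_val_one, Matrix.head_cons, Matrix.cons_val_zero]
          rw [← pow_mul]
        have hexp : φ xx = B (X 0) ^ 10 * (φ u) ^ 3 := by
          show φ (A (X 1 ^ 5) * u ^ 3) = _
          rw [map_mul, hφap (A (X 1 ^ 5)), hφA, hψ5, map_pow]
        rw [hexp]
        linear_combination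
          (B (X 0) ^ 10 * ((φ u * B (X 0) ^ 3) ^ 2 + φ u * B (X 0) ^ 3 + 1)) * hφu
      exact mul_right_cancel₀ (pow_ne_zero 9 hBX0) key
    have hφyy : φ yy = B (X 1) := by
      have key : φ yy * B (X 0) ^ 6 = B (X 1) * B (X 0) ^ 6 := by
        have hψ2 : ψ (X 2 * X 1 ^ 2) = B (X 1) * B (X 0) ^ 6 := by
          rw [map_mul, map_pow, hψ, aeval_X, aeval_X, hg]
          simp only [Matrix.cons_val_two, Matrix.tail_cons, Matrix.head_cons,
            Matrix.cons_val_one, Matrix.cons_val_zero]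
          ring
        have hexp : φ yy = B (X 1) * B (X 0) ^ 6 * (φ u) ^ 2 := by
          show φ (A (X 2 * X 1 ^ 2) * u ^ 2) = _
          rw [map_mul, hφap (A (X 2 * X 1 ^ 2)), hφA, hψ2, map_pow]
        rw [hexp]
        linear_combination (B (X 1) * B (X 0) ^ 6 * (φ u * B (X 0) ^ 3 + 1)) * hφu
      exact mul_right_cancel₀ (pow_ne_zero 6 hBX0) key
    have indep : AlgebraicIndependent k
        (⇑(IsScalarTower.toAlgHom k (MvPolynomial (Fin 2) k) F) ∘ X) := by
      refine ((IsScalarTower.toAlgHom k (MvPolynomial (Fin 2) k) F).algebraicIndependent_iff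
        ?_).2 (MvPolynomial.algebraicIndependent_X (Fin 2) k)
      rw [IsScalarTower.coe_toAlgHom']
      exact hBinj
    apply AlgebraicIndependent.of_comp φ
    have heq : ⇑φ ∘ ![xx, yy] = ⇑(IsScalarTower.toAlgHom k (MvPolynomial (Fin 2) k) F) ∘ X := by
      funext i
      fin_cases i <;>
        simp [hφxx, hφyy, IsScalarTower.coe_toAlgHom', hB]
    rw [heq]
    exact indep
end
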